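/- (Combined regret decomposition.) Let μ, f*, f_new, y* ∈ ℝ, σ*, σ_new > 0, β ≥ 0, and suppose |μ* − f*| ≤ √β·σ* and |μ_new − f_new| ≤ √β·σ_new, where μ*, σ* (resp. μ_new, σ_new) are the posterior mean and standard deviation at the optimum (resp. consensus point). Then with z_new = (μ_new − y*)/σ_new and z* = (μ* − y*)/σ*, the regret r = f* − f_new satisfies r ≤ σ*·τ(z*) + √β·σ* + σ_new·(τ(−z_new) − τ(z_new) + √β). -/

import Mathlib

open Real MeasureTheory Filter

/-- The standard normal probability density function φ. -/
noncomputable def stdNormalPDF (z : ℝ) : ℝ := (Real.sqrt (2 * Real.pi))⁻¹ * Real.exp (-z ^ 2 / 2)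

/-- The standard normal cumulative distribution function Φ. -/
noncomputable def stdNormalCDF (z : ℝ) : ℝ := ∫ t in Set.Iic z, stdNormalPDF t

/-- τ(z) = z Φ(z) + φ(z). -/
noncomputable def tau (z : ℝ) : ℝ := z * stdNormalCDF z + stdNormalPDF z

/-!
Write `z* = (μ* - y*)/σ*` and `z_new = (μ_new - y*)/σ_new`. The regret splits as
`(f* - μ*) + σ* z* - σ_new z_new + (μ_new - f_new)`; the outer terms are bounded by the confidence
bounds. Two facts about `τ` handle the rest: `τ z - τ (-z) = z`, since `φ` is even and
`Φ z + Φ (-z) = 1`; and `τ ≥ 0`, which is the Mills-ratio inequality `a Φ(-a) ≤ φ(a)`, obtained by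
comparing `a ∫_a^∞ φ` with `∫_a^∞ t φ(t) dt = φ(a)`. Together they give `z ≤ τ z`.
-/

open ProbabilityTheory

lemma stdNormalPDF_eq_gaussianPDFReal : stdNormalPDF = gaussianPDFReal 0 1 := by
  ext z
  simp [stdNormalPDF, gaussianPDFReal_def]

lemma stdNormalPDF_nonneg (z : ℝ) : 0 ≤ stdNormalPDF z := by
  unfold stdNormalPDF
  positivity

lemma stdNormalPDF_neg (z : ℝ) : stdNormalPDF (-z) = stdNormalPDF z := by
  simp [stdNormalPDF]

lemma integrable_stdNormalPDF : Integrable stdNormalPDF :=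
  stdNormalPDF_eq_gaussianPDFReal ▸ integrable_gaussianPDFReal 0 1

lemma integral_stdNormalPDF : ∫ t, stdNormalPDF t = 1 :=
  stdNormalPDF_eq_gaussianPDFReal ▸ integral_gaussianPDFReal_eq_one 0 one_ne_zero

lemma stdNormalCDF_neg (z : ℝ) : stdNormalCDF (-z) = ∫ t in Set.Ioi z, stdNormalPDF t := by
  calc stdNormalCDF (-z) = ∫ t in Set.Iic (-z), stdNormalPDF (-t) := by
        simp only [stdNormalCDF, stdNormalPDF_neg]
    _ = ∫ t in Set.Ioi z, stdNormalPDF t := by rw [integral_comp_neg_Iic, neg_neg]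

lemma stdNormalCDF_add_stdNormalCDF_neg (z : ℝ) : stdNormalCDF z + stdNormalCDF (-z) = 1 := by
  rw [stdNormalCDF_neg, ← integral_stdNormalPDF]
  exact intervalIntegral.integral_Iic_add_Ioi
    integrable_stdNormalPDF.integrableOn integrable_stdNormalPDF.integrableOn

lemma hasDerivAt_stdNormalPDF (x : ℝ) : HasDerivAt stdNormalPDF (-x * stdNormalPDF x) x := by
  refine ((((hasDerivAt_pow 2 x).neg.div_const 2).exp).const_mul
    (Real.sqrt (2 * Real.pi))⁻¹).congr_deriv ?_
  simp only [stdNormalPDF, Pi.neg_apply]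
  push_cast
  ring

lemma tendsto_stdNormalPDF_atTop : Tendsto stdNormalPDF atTop (nhds 0) := by
  have hexp : Tendsto (fun t : ℝ => Real.exp (-t ^ 2 / 2)) atTop (nhds 0) :=
    Real.tendsto_exp_atBot.comp <| Tendsto.atBot_div_const two_pos <|
      tendsto_neg_atBot_iff.mpr (tendsto_pow_atTop two_ne_zero)
  have h := hexp.const_mul (Real.sqrt (2 * Real.pi))⁻¹
  rwa [mul_zero] at h

lemma integrable_mul_stdNormalPDF : Integrable fun t => t * stdNormalPDF t := by
  refine ((integrable_mul_exp_neg_mul_sq one_half_pos).const_mul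
    (Real.sqrt (2 * Real.pi))⁻¹).congr (.of_forall fun t => ?_)
  simp only [stdNormalPDF]
  ring_nf

lemma integral_Ioi_mul_stdNormalPDF (a : ℝ) :
    ∫ t in Set.Ioi a, t * stdNormalPDF t = stdNormalPDF a := by
  have hderiv (x : ℝ) : HasDerivAt (fun t => -stdNormalPDF t) (x * stdNormalPDF x) x :=
    (hasDerivAt_stdNormalPDF x).neg.congr_deriv (by ring)
  rw [integral_Ioi_of_hasDerivAt_of_tendsto (hderiv a).continuousAt.continuousWithinAt
    (fun x _ => hderiv x) integrable_mul_stdNormalPDF.integrableOn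
    (by simpa using tendsto_stdNormalPDF_atTop.neg)]
  ring

lemma mul_stdNormalCDF_neg_le (a : ℝ) : a * stdNormalCDF (-a) ≤ stdNormalPDF a := by
  rw [stdNormalCDF_neg, ← integral_Ioi_mul_stdNormalPDF a, ← integral_const_mul]
  refine setIntegral_mono_on (integrable_stdNormalPDF.integrableOn.const_mul a)
    integrable_mul_stdNormalPDF.integrableOn measurableSet_Ioi fun x hx => ?_
  exact mul_le_mul_of_nonneg_right (le_of_lt hx) (stdNormalPDF_nonneg x)

lemma tau_nonneg (z : ℝ) : 0 ≤ tau z := by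
  have := mul_stdNormalCDF_neg_le (-z)
  rw [neg_neg, stdNormalPDF_neg] at this
  rw [tau]
  linarith

lemma tau_sub_tau_neg (z : ℝ) : tau z - tau (-z) = z := by
  have h := stdNormalCDF_add_stdNormalCDF_neg z
  rw [tau, tau, stdNormalPDF_neg]
  linear_combination z * h

lemma le_tau (z : ℝ) : z ≤ tau z := by
  linarith [tau_sub_tau_neg z, tau_nonneg (-z)]

lemma le_mul_tau_div {σ : ℝ} (hσ : 0 < σ) (x : ℝ) : x ≤ σ * tau (x / σ) := by
  calc x = σ * (x / σ) := (mul_div_cancel₀ x hσ.ne').symm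
    _ ≤ σ * tau (x / σ) := mul_le_mul_of_nonneg_left (le_tau _) hσ.le

lemma mul_tau_neg_div_sub_tau_div {σ : ℝ} (hσ : σ ≠ 0) (x : ℝ) :
    σ * (tau (-(x / σ)) - tau (x / σ)) = -x := by
  rw [← neg_sub, tau_sub_tau_neg, mul_neg, mul_div_cancel₀ x hσ]

theorem combined_regret_decomposition_general
    (μstar μnew fstar fnew ystar σstar σnew β : ℝ)
    (hσstar : 0 < σstar) (hσnew : 0 < σnew)
    (hstar : |μstar - fstar| ≤ Real.sqrt β * σstar)
    (hnew : |μnew - fnew| ≤ Real.sqrt β * σnew) :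
    fstar - fnew ≤
      σstar * tau ((μstar - ystar) / σstar) + Real.sqrt β * σstar +
      σnew * (tau (-((μnew - ystar) / σnew)) - tau ((μnew - ystar) / σnew) + Real.sqrt β) := by
  have hconf_star := (abs_le.mp hstar).1
  have hconf_new := (abs_le.mp hnew).2
  have hterm_star := le_mul_tau_div hσstar (μstar - ystar)
  have hterm_new := mul_tau_neg_div_sub_tau_div hσnew.ne' (μnew - ystar)
  rw [mul_add, hterm_new]
  linarith

theorem combined_regret_decomposition
    (μstar μnew fstar fnew ystar σstar σnew β : ℝ)
    (hσstar : 0 < σstar) (hσnew : 0 < σnew) (hβ : 0 ≤ β)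
    (hstar : |μstar - fstar| ≤ Real.sqrt β * σstar)
    (hnew : |μnew - fnew| ≤ Real.sqrt β * σnew) :
    fstar - fnew ≤
      σstar * tau ((μstar - ystar) / σstar) + Real.sqrt β * σstar +
      σnew * (tau (-((μnew - ystar) / σnew)) - tau ((μnew - ystar) / σnew) + Real.sqrt β) :=
  combined_regret_decomposition_general μstar μnew fstar fnew ystar σstar σnew β hσstar hσnew hstar
    hnew
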